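/- arXiv:1506.00552 — 2 statements merged into one kernel-verified Lean document; each statement's English description precedes it below -/
import Mathlib

section
/- Let f : ℝⁿ → ℝ be differentiable and let μ₁ > 0. Then f satisfies f(y) ≥ f(x) + ⟨∇f(x), y − x⟩ + (μ₁/2)‖y − x‖₁² for all x, y ∈ ℝⁿ if and only if ⟨∇f(y) − ∇f(x), y − x⟩ ≥ μ₁‖y − x‖₁² for all x, y ∈ ℝⁿ. -/
/-!
Adding the strong convexity inequality at `(x, y)` and at `(y, x)` gives strong monotonicity of the
gradient. Conversely, with `v = y - x`, the function
`t ↦ f (x + t • v) - t * ⟪f' x, v⟫ - μ / 2 * p v ^ 2 * t ^ 2` has derivative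
`⟪f' (x + t • v) - f' x, v⟫ - μ * p v ^ 2 * t`, which is nonnegative for `t > 0` by strong
monotonicity at `x` and `x + t • v`; so its value at `1` dominates its value at `0`.
-/

open scoped RealInnerProductSpace

open Set

section StrongConvexity

variable {E : Type*} [NormedAddCommGroup E] [InnerProductSpace ℝ E]
  {f : E → ℝ} {f' : E → E} {p : Seminorm ℝ E} {μ : ℝ}

theorem inner_sub_ge_of_forall_le_add_inner
    (H : ∀ x y, f x + ⟪f' x, y - x⟫ + μ / 2 * p (y - x) ^ 2 ≤ f y) (x y : E) :
    μ * p (y - x) ^ 2 ≤ ⟪f' y - f' x, y - x⟫ := by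
  have hxy := H x y
  have hyx := H y x
  rw [← neg_sub y x, map_neg_eq_map, inner_neg_right] at hyx
  rw [inner_sub_left]
  linarith

theorem hasDerivAt_comp_add_smul [CompleteSpace E] (hf : ∀ x, HasGradientAt f (f' x) x)
    (x v : E) (t : ℝ) :
    HasDerivAt (fun t : ℝ => f (x + t • v)) ⟪f' (x + t • v), v⟫ t := by
  have hline : HasDerivAt (fun t : ℝ => x + t • v) v t := by
    simpa using ((hasDerivAt_id t).smul_const v).const_add x
  exact (hf (x + t • v)).hasFDerivAt.comp_hasDerivAt t hline

theorem forall_le_add_inner_of_inner_sub_ge [CompleteSpace E] (hf : ∀ x, HasGradientAt f (f' x) x)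
    (H : ∀ x y, μ * p (y - x) ^ 2 ≤ ⟪f' y - f' x, y - x⟫) (x y : E) :
    f x + ⟪f' x, y - x⟫ + μ / 2 * p (y - x) ^ 2 ≤ f y := by
  set v := y - x
  set c := ⟪f' x, v⟫
  set h : ℝ → ℝ := fun t => f (x + t • v) - (t * c + μ / 2 * p v ^ 2 * t ^ 2)
  have hderiv (t : ℝ) : HasDerivAt h (⟪f' (x + t • v), v⟫ - (c + μ * p v ^ 2 * t)) t := by
    have hquad : HasDerivAt (fun t : ℝ => t * c + μ / 2 * p v ^ 2 * t ^ 2)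
        (c + μ * p v ^ 2 * t) t := by
      refine (((hasDerivAt_id' t).mul_const c).add
        ((hasDerivAt_pow 2 t).const_mul (μ / 2 * p v ^ 2))).congr_deriv ?_
      push_cast
      ring
    exact (hasDerivAt_comp_add_smul hf x v t).sub hquad
  have hderiv_nonneg (t : ℝ) (ht : 0 < t) : 0 ≤ ⟪f' (x + t • v), v⟫ - (c + μ * p v ^ 2 * t) := by
    have hmono := H x (x + t • v)
    rw [add_sub_cancel_left, map_smul_eq_mul, Real.norm_of_nonneg ht.le, inner_smul_right,
      inner_sub_left] at hmono
    nlinarith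
  have hmonoOn : MonotoneOn h (Ici 0) := by
    refine monotoneOn_of_hasDerivWithinAt_nonneg (convex_Ici 0)
      (fun t _ => (hderiv t).continuousAt.continuousWithinAt)
      (fun t _ => (hderiv t).hasDerivWithinAt) fun t ht => ?_
    rw [interior_Ici] at ht
    exact hderiv_nonneg t ht
  have h01 : h 0 ≤ h 1 := hmonoOn self_mem_Ici (by norm_num) zero_le_one
  simp only [h, v, zero_smul, add_zero, one_smul, add_sub_cancel] at h01
  linarith

end StrongConvexity

def l1Seminorm (ι : Type*) [Fintype ι] : Seminorm ℝ (EuclideanSpace ℝ ι) :=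
  Seminorm.of (fun v => ∑ i, |v i|)
    (fun v w => by
      simpa only [PiLp.add_apply, Finset.sum_add_distrib] using
        Finset.sum_le_sum fun i _ => abs_add_le (v i) (w i))
    (fun a v => by
      simp only [PiLp.smul_apply, smul_eq_mul, abs_mul, Real.norm_eq_abs, Finset.mul_sum])

theorem l1Seminorm_sub {ι : Type*} [Fintype ι] (x y : EuclideanSpace ℝ ι) :
    l1Seminorm ι (y - x) = ∑ i, |y i - x i| :=
  rfl

theorem strong_convexity_one_norm_iff_monotone_gradient_general {n : ℕ}
    (f : EuclideanSpace ℝ (Fin n) → ℝ)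
    (f' : EuclideanSpace ℝ (Fin n) → EuclideanSpace ℝ (Fin n))
    (hf : ∀ x, HasGradientAt f (f' x) x)
    (μ₁ : ℝ) :
    (∀ x y, f y ≥ f x + ⟪f' x, y - x⟫ + μ₁ / 2 * (∑ i, |y i - x i|) ^ 2) ↔
    (∀ x y : EuclideanSpace ℝ (Fin n),
      ⟪f' y - f' x, y - x⟫ ≥ μ₁ * (∑ i, |y i - x i|) ^ 2) := by
  simp only [ge_iff_le, ← l1Seminorm_sub]
  exact ⟨inner_sub_ge_of_forall_le_add_inner, forall_le_add_inner_of_inner_sub_ge hf⟩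

/-- equivalent characterization of `μ₁`-strong convexity in the
1-norm via gradient monotonicity. -/
theorem strong_convexity_one_norm_iff_monotone_gradient {n : ℕ}
    (f : EuclideanSpace ℝ (Fin n) → ℝ)
    (f' : EuclideanSpace ℝ (Fin n) → EuclideanSpace ℝ (Fin n))
    (hf : ∀ x, HasGradientAt f (f' x) x)
    (μ₁ : ℝ) (hμ₁ : 0 < μ₁) :
    (∀ x y, f y ≥ f x + ⟪f' x, y - x⟫ + μ₁ / 2 * (∑ i, |y i - x i|) ^ 2) ↔
    (∀ x y : EuclideanSpace ℝ (Fin n),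
      ⟪f' y - f' x, y - x⟫ ≥ μ₁ * (∑ i, |y i - x i|) ^ 2) :=
  strong_convexity_one_norm_iff_monotone_gradient_general f f' hf μ₁
end

section
/- Let f : ℝⁿ → ℝ be convex and differentiable with coordinate-wise L-Lipschitz continuous gradient, μ₁-strongly convex in the 1-norm (0 < μ₁ < L), and minimizer x*. Suppose at each iteration the coordinate i_k satisfies |∇_{i_k}f(x^k)| ≥ ‖∇f(x^k)‖∞ − ε_k with ε_k ≥ 0, and x^{k+1} = x^k − (1/L)∇_{i_k}f(x^k)e_{i_k}. Then for every k, f(x^k) − f(x*) ≤ (1 − μ₁/L)^k [f(x⁰) − f(x*) + A_k], where A_k = Σ_{i=1}^{k} (1 − μ₁/L)^{−i} (ε_i √(2/L) √(f(x⁰) − f(x*)) + ε_i²/(2L)). -/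
/-!
A coordinate step of length `1 / L` decreases `f` by at least `(∇ᵢ f)² / (2L)`, by the
coordinate-wise descent lemma. Strong convexity in the 1-norm together with Hölder's inequality
`|⟪g, d⟫| ≤ ‖g‖∞ ‖d‖₁` gives the Polyak–Łojasiewicz inequality
`2 μ₁ (f x - f x*) ≤ ‖∇f x‖∞²`. The selection rule gives
`(∇_{iₖ} f)² ≥ ‖∇f‖∞² - 2 εₖ ‖∇f‖∞`, and `‖∇f(xᵏ)‖∞ ≤ √(2L (f x⁰ - f x*))` because the iterates
descend. Hence `δₖ₊₁ ≤ (1 - μ₁/L) δₖ + εₖ₊₁ √(2/L) √δ₀ + εₖ₊₁² / (2L)` for `δₖ = f xᵏ - f x*`,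
and unrolling this recursion gives the bound.
-/

open scoped RealInnerProductSpace

lemma apply_le_apply_zero_of_hasDerivAt {ψ ψ' : ℝ → ℝ} (hψ : ∀ t, HasDerivAt ψ (ψ' t) t)
    (hpos : ∀ t, 0 < t → ψ' t ≤ 0) (hneg : ∀ t, t < 0 → 0 ≤ ψ' t) (a : ℝ) : ψ a ≤ ψ 0 := by
  have hcont : Continuous ψ := continuous_iff_continuousAt.2 fun t => (hψ t).continuousAt
  have hderiv : ∀ s, ∀ t ∈ interior s, HasDerivWithinAt ψ (ψ' t) (interior s) t :=
    fun _ t _ => (hψ t).hasDerivWithinAt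
  rcases le_total 0 a with ha | ha
  · refine antitoneOn_of_hasDerivWithinAt_nonpos (convex_Icc 0 a) hcont.continuousOn (hderiv _)
      (fun t ht => hpos t ?_) (Set.left_mem_Icc.2 ha) (Set.right_mem_Icc.2 ha) ha
    rw [interior_Icc] at ht
    exact ht.1
  · refine monotoneOn_of_hasDerivWithinAt_nonneg (convex_Icc a 0) hcont.continuousOn (hderiv _)
      (fun t ht => hneg t ?_) (Set.left_mem_Icc.2 ha) (Set.right_mem_Icc.2 ha) ha
    rw [interior_Icc] at ht
    exact ht.2

lemma le_pow_mul_add_sum_of_le_mul_add {ρ : ℝ} (hρ : 0 < ρ) {δ E : ℕ → ℝ}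
    (h : ∀ k, δ (k + 1) ≤ ρ * δ k + E (k + 1)) (k : ℕ) :
    δ k ≤ ρ ^ k * (δ 0 + ∑ i ∈ Finset.Icc 1 k, (ρ ^ i)⁻¹ * E i) := by
  induction k with
  | zero => simp
  | succ k ih =>
    have hE : ρ ^ (k + 1) * ((ρ ^ (k + 1))⁻¹ * E (k + 1)) = E (k + 1) := by
      field_simp
    calc δ (k + 1) ≤ ρ * (ρ ^ k * (δ 0 + ∑ i ∈ Finset.Icc 1 k, (ρ ^ i)⁻¹ * E i)) + E (k + 1) :=
          (h k).trans (by gcongr)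
      _ = ρ ^ (k + 1) * (δ 0 + ∑ i ∈ Finset.Icc 1 (k + 1), (ρ ^ i)⁻¹ * E i) := by
          rw [Finset.sum_Icc_succ_top (by omega), ← add_assoc,
            mul_add _ _ ((ρ ^ (k + 1))⁻¹ * _), hE]
          ring

lemma sq_sub_two_mul_le_sq {a M ε : ℝ} (hε : 0 ≤ ε) (haM : |a| ≤ M) (hMa : M - ε ≤ |a|) :
    M ^ 2 - 2 * ε * M ≤ a ^ 2 := by
  nlinarith [sq_abs a, abs_nonneg a]

lemma abs_apply_le_iSup_abs {ι : Type*} [Finite ι] (v : ι → ℝ) (j : ι) : |v j| ≤ ⨆ j, |v j| :=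
  le_ciSup (f := fun j => |v j|) (Set.finite_range _).bddAbove j

lemma abs_inner_le_iSup_abs_mul_sum_abs {ι : Type*} [Fintype ι] (u v : EuclideanSpace ℝ ι) :
    |⟪u, v⟫| ≤ (⨆ j, |u j|) * ∑ j, |v j| := by
  calc |⟪u, v⟫| = |∑ j, u j * v j| := by simp [PiLp.inner_apply, mul_comm]
    _ ≤ ∑ j, |u j| * |v j| := by
      simpa only [abs_mul] using Finset.abs_sum_le_sum_abs (fun j => u j * v j) Finset.univ
    _ ≤ (⨆ j, |u j|) * ∑ j, |v j| := by
      rw [Finset.mul_sum]; gcongr with j; exact abs_apply_le_iSup_abs _ j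

section CoordinateDescent

variable {ι : Type*} [Fintype ι] {f : EuclideanSpace ℝ ι → ℝ}
  {f' : EuclideanSpace ℝ ι → EuclideanSpace ℝ ι}

lemma two_mul_sub_le_sq_iSup_abs_grad {μ : ℝ} (hμ : 0 ≤ μ)
    (hsc : ∀ x y, f y ≥ f x + ⟪f' x, y - x⟫ + μ / 2 * (∑ i, |y i - x i|) ^ 2)
    (z y : EuclideanSpace ℝ ι) : 2 * μ * (f z - f y) ≤ (⨆ j, |f' z j|) ^ 2 := by
  have hinner := abs_inner_le_iSup_abs_mul_sum_abs (f' z) (y - z)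
  simp only [PiLp.sub_apply] at hinner
  set M := ⨆ j, |f' z j|
  set T := ∑ j, |y j - z j|
  have hT : 0 ≤ T := Finset.sum_nonneg fun j _ => abs_nonneg _
  have hgap : f z - f y ≤ M * T - μ / 2 * T ^ 2 := by
    linarith [hsc z y, neg_abs_le ⟪f' z, y - z⟫]
  -- `M * T - μ / 2 * T ^ 2` is maximised at `T = M / μ`
  nlinarith [sq_nonneg (M - μ * T), mul_le_mul_of_nonneg_left hgap hμ]

variable [DecidableEq ι]

lemma hasDerivAt_apply_add_smul_single (hf : ∀ x, HasGradientAt f (f' x) x)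
    (z : EuclideanSpace ℝ ι) (i : ι) (t : ℝ) :
    HasDerivAt (fun s : ℝ => f (z + s • EuclideanSpace.single i 1))
      (f' (z + t • EuclideanSpace.single i 1) i) t := by
  have hline : HasDerivAt (fun s : ℝ => z + s • EuclideanSpace.single i (1 : ℝ))
      (EuclideanSpace.single i 1) t := by
    simpa using ((hasDerivAt_id t).smul_const (EuclideanSpace.single i (1 : ℝ))).const_add z
  refine ((hf _).hasFDerivAt.comp_hasDerivAt t hline).congr_deriv ?_
  simp [InnerProductSpace.toDual_apply_apply, real_inner_comm, EuclideanSpace.inner_single_left]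

variable {L : ℝ} (hf : ∀ x, HasGradientAt f (f' x) x)
  (hlip : ∀ (x : EuclideanSpace ℝ ι) (α : ℝ) (i : ι),
    |f' (x + α • EuclideanSpace.single i 1) i - f' x i| ≤ L * |α|)
include hf hlip

lemma apply_add_smul_single_le (z : EuclideanSpace ℝ ι) (α : ℝ) (i : ι) :
    f (z + α • EuclideanSpace.single i 1) ≤ f z + α * f' z i + L / 2 * α ^ 2 := by
  have hψ : ∀ t, HasDerivAt
      (fun t => f (z + t • EuclideanSpace.single i 1) - (t * f' z i + L / 2 * t ^ 2))
      (f' (z + t • EuclideanSpace.single i 1) i - (f' z i + L * t)) t := fun t =>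
    (hasDerivAt_apply_add_smul_single hf z i t).sub <|
      (((hasDerivAt_id t).mul_const _).add ((hasDerivAt_pow 2 t).const_mul _)).congr_deriv
        (by simp only [one_mul, Nat.cast_ofNat, Nat.add_one_sub_one, pow_one, add_right_inj]; ring)
  have key := apply_le_apply_zero_of_hasDerivAt hψ
    (fun t ht => by linarith [(abs_le.1 (abs_of_pos ht ▸ hlip z t i)).2])
    (fun t ht => by linarith [(abs_le.1 (abs_of_neg ht ▸ hlip z t i)).1]) α
  simp only [zero_smul, add_zero, zero_mul, ne_eq, OfNat.ofNat_ne_zero, not_false_eq_true,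
    zero_pow, mul_zero, sub_zero] at key
  linarith

lemma apply_sub_smul_single_le (hL : 0 < L) (z : EuclideanSpace ℝ ι) (i : ι) :
    f (z - ((1 / L) * f' z i) • EuclideanSpace.single i 1) ≤ f z - f' z i ^ 2 / (2 * L) := by
  have h := apply_add_smul_single_le hf hlip z (-((1 / L) * f' z i)) i
  rw [neg_smul, ← sub_eq_add_neg] at h
  convert h using 1
  field_simp
  ring

lemma iSup_abs_grad_le_sqrt (hL : 0 < L) {xs : EuclideanSpace ℝ ι} (hxs : ∀ y, f xs ≤ f y)
    (z : EuclideanSpace ℝ ι) : ⨆ j, |f' z j| ≤ √(2 * L * (f z - f xs)) := by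
  refine Real.iSup_le (fun j => Real.abs_le_sqrt ?_) (Real.sqrt_nonneg _)
  have h := (hxs _).trans (apply_sub_smul_single_le hf hlip hL z j)
  rw [le_sub_iff_add_le, ← le_sub_iff_add_le', div_le_iff₀ (by positivity)] at h
  linarith

lemma approx_gauss_southwell_step (hL : 0 < L) {μ : ℝ} (hμ : 0 ≤ μ)
    (hsc : ∀ x y, f y ≥ f x + ⟪f' x, y - x⟫ + μ / 2 * (∑ i, |y i - x i|) ^ 2)
    {xs : EuclideanSpace ℝ ι} (hxs : ∀ y, f xs ≤ f y) {z : EuclideanSpace ℝ ι} {i : ι}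
    {ε D : ℝ} (hε : 0 ≤ ε) (hrule : |f' z i| ≥ (⨆ j, |f' z j|) - ε) (hD : f z - f xs ≤ D) :
    f (z - ((1 / L) * f' z i) • EuclideanSpace.single i 1) - f xs
      ≤ (1 - μ / L) * (f z - f xs) + (ε * √(2 / L) * √D + ε ^ 2 / (2 * L)) := by
  set M := ⨆ j, |f' z j|
  have hdesc := apply_sub_smul_single_le hf hlip hL z i
  have hPL := two_mul_sub_le_sq_iSup_abs_grad hμ hsc z xs
  have hgrad : M ^ 2 - 2 * ε * M ≤ f' z i ^ 2 :=
    sq_sub_two_mul_le_sq hε (abs_apply_le_iSup_abs _ i) hrule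
  have hM : M ≤ L * (√(2 / L) * √D) := calc
    M ≤ √(2 * L * (f z - f xs)) := iSup_abs_grad_le_sqrt hf hlip hL hxs z
    _ = √(L ^ 2 * (2 / L * (f z - f xs))) := by congr 1; field_simp
    _ ≤ √(L ^ 2 * (2 / L * D)) := by gcongr
    _ = L * (√(2 / L) * √D) := by
      rw [Real.sqrt_mul (sq_nonneg L), Real.sqrt_sq hL.le, Real.sqrt_mul (by positivity)]
  have hεM := mul_le_mul_of_nonneg_left hM hε
  rw [← mul_le_mul_iff_of_pos_left (by positivity : 0 < 2 * L)]
  have hdesc' : 2 * L * f (z - ((1 / L) * f' z i) • EuclideanSpace.single i 1)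
      ≤ 2 * L * f z - f' z i ^ 2 := by
    have := mul_le_mul_of_nonneg_left hdesc (by positivity : 0 ≤ 2 * L)
    rwa [mul_sub, mul_div_cancel₀ _ (by positivity)] at this
  have hrhs : 2 * L * ((1 - μ / L) * (f z - f xs) + (ε * √(2 / L) * √D + ε ^ 2 / (2 * L)))
      = 2 * L * (f z - f xs) - 2 * μ * (f z - f xs) + 2 * (ε * (L * (√(2 / L) * √D))) + ε ^ 2 := by
    field_simp
    ring
  rw [hrhs]
  linarith [sq_nonneg ε]

end CoordinateDescent

theorem approx_gauss_southwell_additive_L_general {n : ℕ}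
    (f : EuclideanSpace ℝ (Fin n) → ℝ)
    (f' : EuclideanSpace ℝ (Fin n) → EuclideanSpace ℝ (Fin n))
    (hf : ∀ x, HasGradientAt f (f' x) x)
    (L : ℝ) (hL : 0 < L)
    (hlip : ∀ (x : EuclideanSpace ℝ (Fin n)) (α : ℝ) (i : Fin n),
      |f' (x + α • EuclideanSpace.single i 1) i - f' x i| ≤ L * |α|)
    (μ₁ : ℝ) (hμ₁ : 0 < μ₁) (hμ₁L : μ₁ < L)
    (hsc : ∀ x y, f y ≥ f x + ⟪f' x, y - x⟫ + μ₁ / 2 * (∑ i, |y i - x i|) ^ 2)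
    (xs : EuclideanSpace ℝ (Fin n)) (hxs : ∀ y, f xs ≤ f y)
    (x : ℕ → EuclideanSpace ℝ (Fin n)) (ik : ℕ → Fin n)
    (ε : ℕ → ℝ) (hε : ∀ k, 0 ≤ ε k)
    (hrule : ∀ k, |f' (x k) (ik k)| ≥ (⨆ j, |f' (x k) j|) - ε (k + 1))
    (hstep : ∀ k, x (k + 1)
      = x k - ((1 / L) * f' (x k) (ik k)) • EuclideanSpace.single (ik k) 1) :
    ∀ k : ℕ, f (x k) - f xs ≤ (1 - μ₁ / L) ^ k *
      (f (x 0) - f xs +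
        ∑ i ∈ Finset.Icc 1 k, ((1 - μ₁ / L) ^ i)⁻¹ *
          (ε i * Real.sqrt (2 / L) * Real.sqrt (f (x 0) - f xs)
            + (ε i) ^ 2 / (2 * L))) := by
  have hρ : 0 < 1 - μ₁ / L := by rwa [sub_pos, div_lt_one hL]
  have hmono : Antitone fun k => f (x k) - f xs := antitone_nat_of_succ_le fun k => by
    have := apply_sub_smul_single_le hf hlip hL (x k) (ik k)
    rw [hstep k]
    linarith [div_nonneg (sq_nonneg (f' (x k) (ik k))) (by positivity : 0 ≤ 2 * L)]
  refine le_pow_mul_add_sum_of_le_mul_add hρ (δ := fun k => f (x k) - f xs) fun k => ?_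
  rw [hstep k]
  exact approx_gauss_southwell_step hf hlip hL hμ₁.le hsc hxs (hε (k + 1)) (hrule k)
    (hmono (Nat.zero_le k))

/-- convergence of approximate Gauss-Southwell with additive
errors, with the error term expressed in terms of `L` only. -/
theorem approx_gauss_southwell_additive_L {n : ℕ}
    (f : EuclideanSpace ℝ (Fin n) → ℝ)
    (hconv : ConvexOn ℝ Set.univ f)
    (f' : EuclideanSpace ℝ (Fin n) → EuclideanSpace ℝ (Fin n))
    (hf : ∀ x, HasGradientAt f (f' x) x)
    (L : ℝ) (hL : 0 < L)
    (hlip : ∀ (x : EuclideanSpace ℝ (Fin n)) (α : ℝ) (i : Fin n),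
      |f' (x + α • EuclideanSpace.single i 1) i - f' x i| ≤ L * |α|)
    (μ₁ : ℝ) (hμ₁ : 0 < μ₁) (hμ₁L : μ₁ < L)
    (hsc : ∀ x y, f y ≥ f x + ⟪f' x, y - x⟫ + μ₁ / 2 * (∑ i, |y i - x i|) ^ 2)
    (xs : EuclideanSpace ℝ (Fin n)) (hxs : ∀ y, f xs ≤ f y)
    (x : ℕ → EuclideanSpace ℝ (Fin n)) (ik : ℕ → Fin n)
    (ε : ℕ → ℝ) (hε : ∀ k, 0 ≤ ε k)
    (hrule : ∀ k, |f' (x k) (ik k)| ≥ (⨆ j, |f' (x k) j|) - ε (k + 1))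
    (hstep : ∀ k, x (k + 1)
      = x k - ((1 / L) * f' (x k) (ik k)) • EuclideanSpace.single (ik k) 1) :
    ∀ k : ℕ, f (x k) - f xs ≤ (1 - μ₁ / L) ^ k *
      (f (x 0) - f xs +
        ∑ i ∈ Finset.Icc 1 k, ((1 - μ₁ / L) ^ i)⁻¹ *
          (ε i * Real.sqrt (2 / L) * Real.sqrt (f (x 0) - f xs)
            + (ε i) ^ 2 / (2 * L))) :=
  approx_gauss_southwell_additive_L_general f f' hf L hL hlip μ₁ hμ₁ hμ₁L hsc xs hxs x ik ε hε hrule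
    hstep
end
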